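/- arXiv:1901.00424 — 8 statements merged into one kernel-verified Lean document; each statement's English description precedes it below -/
import Mathlib

section
/- Let γ ∈ (0,1), ζ ∈ (0,1), δ ≥ 0, r ∈ ℝ, β > 0 with δ + (γ−1)r > 0. Define u_0(m) := [ (1/β) ∫_0^∞ exp(−(1−ζ^{1−γ}) m y / (βγ)) · (y+1)^{−(1 + (δ+(γ−1)r)/(βγ))} dy ]^{−1}. Then u_0(m) < c_0(m) + β for all m > 0, where c_0(m) := (δ + (1−ζ^{1−γ}) m)/γ + (1 − 1/γ) r. -/
open Real MeasureTheory Set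

/-- The optimal consumption-wealth ratio with aging but no healthcare. -/
noncomputable def u0 (γ ζ δ r β : ℝ) (m : ℝ) : ℝ :=
  ((1 / β) * ∫ y in Ioi (0 : ℝ),
      Real.exp (-((1 - ζ ^ (1 - γ)) * m * y) / (β * γ)) *
        (y + 1) ^ (-(1 + (δ + (γ - 1) * r) / (β * γ))))⁻¹

/-- The consumption-wealth ratio without aging. -/
noncomputable def c0 (γ ζ δ r : ℝ) (m : ℝ) : ℝ :=
  (δ + (1 - ζ ^ (1 - γ)) * m) / γ + (1 - 1 / γ) * r

lemma exp_int (c : ℝ) (hc : 0 < c) :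
    ∫ y in Ioi (0:ℝ), Real.exp (-(c*y)) = c⁻¹ := by
  have h := MeasureTheory.integral_comp_mul_left_Ioi (fun x => Real.exp (-x)) 0 hc
  simp only [mul_zero, integral_exp_neg_Ioi, neg_zero, Real.exp_zero, smul_eq_mul,
    mul_one] at h
  simpa using h

theorem stmt_1 (γ ζ δ r β : ℝ) (hγ : γ ∈ Ioo (0 : ℝ) 1) (hζ : ζ ∈ Ioo (0 : ℝ) 1)
    (hδ : 0 ≤ δ) (hβ : 0 < β) (hwell : 0 < δ + (γ - 1) * r) :
    ∀ m > 0, u0 γ ζ δ r β m < c0 γ ζ δ r m + β := by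
  intro m hm
  obtain ⟨hγ0, hγ1⟩ := hγ
  have hζlt : ζ ^ (1 - γ) < 1 := Real.rpow_lt_one hζ.1.le hζ.2 (by linarith)
  have hBp : 0 < β * γ := mul_pos hβ hγ0
  simp only [u0, c0]
  set A : ℝ := (1 - ζ ^ (1 - γ)) * m with hAdef
  have hAp : 0 < A := mul_pos (by linarith) hm
  set a : ℝ := A / (β * γ) with hadef
  set b : ℝ := (δ + (γ - 1) * r) / (β * γ) with hbdef
  have hap : 0 < a := div_pos hAp hBp
  have hbp : 0 < b := div_pos hwell hBp
  set f : ℝ → ℝ := fun y => Real.exp (-(A * y) / (β * γ)) * (y + 1) ^ (-(1 + b)) with hf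
  set g : ℝ → ℝ := fun y => Real.exp (-((a + 1 + b) * y)) with hg
  have hsump : 0 < a + 1 + b := by linarith
  have hfeq : ∀ y, f y = Real.exp (-(a * y)) * (y + 1) ^ (-(1 + b)) := by
    intro y
    simp only [hf, hadef]
    rw [div_mul_eq_mul_div, neg_div]
  -- pointwise strict inequality on Ioi 0
  have hlt : ∀ y ∈ Ioi (0:ℝ), g y < f y := by
    intro y hy
    have hy0 : (0:ℝ) < y := hy
    have hy1 : (0:ℝ) < y + 1 := by linarith
    rw [hfeq, Real.rpow_def_of_pos hy1, ← Real.exp_add]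
    apply Real.exp_lt_exp.2
    have hlog : Real.log (y + 1) < y := by
      have := Real.log_lt_sub_one_of_pos hy1 (by linarith)
      linarith
    have h1b : (0:ℝ) < 1 + b := by linarith
    nlinarith [mul_lt_mul_of_pos_left hlog h1b]
  -- f is bounded by exp (-(a*y)) on Ioi 0
  have hbound : ∀ y ∈ Ioi (0:ℝ), f y ≤ Real.exp (-(a * y)) := by
    intro y hy
    have hy0 : (0:ℝ) < y := hy
    rw [hfeq]
    have h1 : (y + 1) ^ (-(1 + b)) ≤ 1 :=
      Real.rpow_le_one_of_one_le_of_nonpos (by linarith) (by linarith)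
    nlinarith [Real.exp_pos (-(a * y))]
  have hfnonneg : ∀ y ∈ Ioi (0:ℝ), 0 ≤ f y := by
    intro y hy
    have hy0 : (0:ℝ) < y := hy
    exact mul_nonneg (Real.exp_pos _).le (Real.rpow_nonneg (by linarith) _)
  -- measurability / integrability of f on Ioi 0
  have hfmeas : AEStronglyMeasurable f (volume.restrict (Ioi (0:ℝ))) := by
    apply ContinuousOn.aestronglyMeasurable _ measurableSet_Ioi
    intro y hy
    have hy0 : (0:ℝ) < y := hy
    apply ContinuousAt.continuousWithinAt
    apply ContinuousAt.mul
    · exact (Real.continuous_exp.comp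
        (((continuous_const.mul continuous_id).neg).div_const _)).continuousAt
    · exact ContinuousAt.rpow_const (continuousAt_id.add continuousAt_const)
        (Or.inl (by positivity))
  have hgi : IntegrableOn g (Ioi (0:ℝ)) := by
    have := exp_neg_integrableOn_Ioi 0 hsump
    simp only [neg_mul] at this
    exact this
  have hfi : IntegrableOn f (Ioi (0:ℝ)) := by
    apply Integrable.mono' (g := fun y => Real.exp (-(a * y)))
    · have := exp_neg_integrableOn_Ioi 0 hap
      simp only [neg_mul] at this
      exact this
    · exact hfmeas
    · filter_upwards [ae_restrict_mem measurableSet_Ioi] with y hy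
      rw [Real.norm_eq_abs, abs_of_nonneg (hfnonneg y hy)]
      exact hbound y hy
  -- strict integral inequality
  have hsub : 0 < ∫ y in Ioi (0:ℝ), (f y - g y) := by
    rw [setIntegral_pos_iff_support_of_nonneg_ae]
    · have hsubset : Ioi (0:ℝ) ⊆ (Function.support fun y => f y - g y) ∩ Ioi 0 :=
        fun y hy => ⟨sub_ne_zero.2 (hlt y hy).ne', hy⟩
      calc (0 : ENNReal) < volume (Ioi (0:ℝ)) := by simp [Real.volume_Ioi]
        _ ≤ _ := measure_mono hsubset
    · filter_upwards [ae_restrict_mem measurableSet_Ioi] with y hy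
      exact sub_nonneg.2 (hlt y hy).le
    · exact hfi.sub hgi
  have hIg : ∫ y in Ioi (0:ℝ), g y = (a + 1 + b)⁻¹ := exp_int _ hsump
  have hIlt : (a + 1 + b)⁻¹ < ∫ y in Ioi (0:ℝ), f y := by
    rw [integral_sub hfi hgi] at hsub
    linarith [hsub, hIg.symm ▸ hsub]
  have hIpos : 0 < ∫ y in Ioi (0:ℝ), f y := lt_trans (by positivity) hIlt
  set I : ℝ := ∫ y in Ioi (0:ℝ), f y with hI
  have hkey : ((1/β) * I)⁻¹ < β * (a + 1 + b) := by
    rw [mul_inv, one_div, inv_inv]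
    have hinv : I⁻¹ < a + 1 + b := by
      have := inv_strictAnti₀ (inv_pos.2 hsump) hIlt
      rwa [inv_inv] at this
    exact mul_lt_mul_of_pos_left hinv hβ
  have hfinal : β * (a + 1 + b) = (δ + A) / γ + (1 - 1/γ) * r + β := by
    rw [hadef, hbdef]
    field_simp
    ring
  calc ((1/β) * I)⁻¹ < β * (a + 1 + b) := hkey
    _ = (δ + A) / γ + (1 - 1/γ) * r + β := hfinal
end

section
/- Let γ ∈ (0,1), ζ ∈ (0,1), r ∈ ℝ, δ ≥ 0, β > 0 with c̄ := δ/γ + (1 − 1/γ)r > 0, and let g satisfy the Inada assumptions with g(I((1−γ)/γ)) < β. Set a := (1−ζ^{1−γ})/γ, c_0(m) = a m + c̄, and define the operator L u(m) := u(m)² − c_0(m) u(m) + m u'(m)( sup_{h≥0}{ g(h) − ((1−γ)/γ) (u(m)/(m u'(m))) h } − β ). Then L(c_0 + β)(m) ≥ β c̄ + β² > 0 for all m > 0, i.e., c_0 + β is a strict classical supersolution of L u = 0 on (0,∞). -/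
/-- Inada-type assumptions on the healthcare efficacy function `g`:
`g(0)=0`, `g` is twice differentiable on `(0,∞)` with `g' > 0`, `g'' < 0`,
`g'(0+) = ∞` and `g'(∞) = 0`, and `g` is nonnegative and continuous on `[0,∞)`. -/
def Inada (g : ℝ → ℝ) : Prop :=
  g 0 = 0 ∧ ContinuousOn g (Set.Ici 0) ∧ (∀ x ≥ (0 : ℝ), 0 ≤ g x) ∧
  (∀ x > (0 : ℝ), DifferentiableAt ℝ g x) ∧
  (∀ x > (0 : ℝ), DifferentiableAt ℝ (deriv g) x) ∧
  (∀ x > (0 : ℝ), 0 < deriv g x) ∧ (∀ x > (0 : ℝ), deriv (deriv g) x < 0) ∧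
  Filter.Tendsto (deriv g) (nhdsWithin 0 (Set.Ioi 0)) Filter.atTop ∧
  Filter.Tendsto (deriv g) Filter.atTop (nhds 0)

theorem stmt_12 (g : ℝ → ℝ) (hg : Inada g) (γ ζ δ r β cbar a : ℝ)
    (hγ : γ ∈ Set.Ioo (0 : ℝ) 1) (hζ : ζ ∈ Set.Ioo (0 : ℝ) 1) (hβ : 0 < β)
    (hcbar : cbar = δ / γ + (1 - 1 / γ) * r) (hcpos : 0 < cbar)
    (I : ℝ → ℝ) (hI : ∀ l > (0 : ℝ), 0 < I l ∧ deriv g (I l) = l)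
    (hgI : g (I ((1 - γ) / γ)) < β)
    (ha : a = (1 - ζ ^ (1 - γ)) / γ)
    (c0 : ℝ → ℝ) (hc0 : ∀ m, c0 m = a * m + cbar) :
    (0 : ℝ) < β * cbar + β ^ 2 ∧
    ∀ m > (0 : ℝ),
      β * cbar + β ^ 2 ≤
        (c0 m + β) ^ 2 - c0 m * (c0 m + β) +
          m * a * (sSup ((fun h => g h - (1 - γ) / γ * ((c0 m + β) / (m * a)) * h) ''
            Set.Ici 0) - β) := by
  obtain ⟨hγ0, hγ1⟩ := hγ
  obtain ⟨hζ0, hζ1⟩ := hζ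
  have ha0 : 0 < a := by
    rw [ha]
    have h1 : ζ ^ (1 - γ) < 1 := Real.rpow_lt_one hζ0.le hζ1 (by linarith)
    have := div_pos (by linarith : (0:ℝ) < 1 - ζ ^ (1 - γ)) hγ0
    linarith
  refine ⟨by positivity, fun m hm => ?_⟩
  simp only [hc0]
  have h0 : (0:ℝ) ∈ (fun h => g h - (1 - γ) / γ * ((c0 m + β) / (m * a)) * h) '' Set.Ici 0 := by
    refine ⟨0, Set.mem_Ici.mpr le_rfl, ?_⟩
    simp [hg.1]
  have hS : 0 ≤ sSup ((fun h => g h - (1 - γ) / γ * ((c0 m + β) / (m * a)) * h) '' Set.Ici 0) := by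
    by_cases hb : BddAbove ((fun h => g h - (1 - γ) / γ * ((c0 m + β) / (m * a)) * h) '' Set.Ici 0)
    · exact le_csSup hb h0
    · rw [Real.sSup_of_not_bddAbove hb]
  simp only [hc0] at hS ⊢
  nlinarith [mul_nonneg (mul_pos hm ha0).le hS]
end

section
/- Under the same assumptions (γ ∈ (0,1), ζ ∈ (0,1), c̄ > 0, Inada g with g(I((1−γ)/γ)) < β), L c_0(m) < 0 for all m > 0, i.e., c_0 is a strict classical subsolution of the reduced HJB equation L u = 0 on (0,∞). -/
theorem stmt_13 (g : ℝ → ℝ) (hg : Inada g) (γ ζ δ r β cbar a : ℝ)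
    (hγ : γ ∈ Set.Ioo (0 : ℝ) 1) (hζ : ζ ∈ Set.Ioo (0 : ℝ) 1) (hβ : 0 < β)
    (hcbar : cbar = δ / γ + (1 - 1 / γ) * r) (hcpos : 0 < cbar)
    (I : ℝ → ℝ) (hI : ∀ l > (0 : ℝ), 0 < I l ∧ deriv g (I l) = l)
    (hgI : g (I ((1 - γ) / γ)) < β)
    (ha : a = (1 - ζ ^ (1 - γ)) / γ)
    (c0 : ℝ → ℝ) (hc0 : ∀ m, c0 m = a * m + cbar) :
    ∀ m > (0 : ℝ),
      (c0 m) ^ 2 - c0 m * c0 m +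
        m * a * (sSup ((fun h => g h - (1 - γ) / γ * (c0 m / (m * a)) * h) ''
          Set.Ici 0) - β) < 0 := by
  obtain ⟨hg0, hgcont, hgnn, hgdiff, hg'diff, hg'pos, hg''neg, _, _⟩ := hg
  have hζpow : ζ ^ (1 - γ) < 1 :=
    Real.rpow_lt_one (le_of_lt hζ.1) hζ.2 (by linarith [hγ.2])
  have hapos : 0 < a := by
    rw [ha]; exact div_pos (by linarith) hγ.1
  have hν : (0 : ℝ) < (1 - γ) / γ := div_pos (by linarith [hγ.2]) hγ.1
  set ν : ℝ := (1 - γ) / γ with hνdef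
  obtain ⟨hIpos, hIder⟩ := hI ν hν
  -- g is monotone on [0,∞)
  have hmono : StrictMonoOn g (Set.Ici 0) := by
    apply strictMonoOn_of_deriv_pos (convex_Ici 0) hgcont
    intro x hx
    rw [interior_Ici] at hx
    exact hg'pos x hx
  -- deriv g is strictly decreasing on (0,∞)
  have hanti : StrictAntiOn (deriv g) (Set.Ioi 0) := by
    apply strictAntiOn_of_deriv_neg (convex_Ioi 0)
    · exact fun x hx => (hg'diff x hx).continuousAt.continuousWithinAt
    · intro x hx
      rw [interior_Ioi] at hx
      exact hg''neg x hx
  intro m hm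
  have hma : 0 < m * a := mul_pos hm hapos
  set μ : ℝ := ν * (c0 m / (m * a)) with hμdef
  have hc0m : c0 m = a * m + cbar := hc0 m
  have hratio : 1 < c0 m / (m * a) := by
    rw [lt_div_iff₀ hma, hc0m]; nlinarith
  have hμν : ν < μ := by
    have := mul_lt_mul_of_pos_left hratio hν
    simpa [hμdef] using this
  have hgInn : 0 ≤ g (I ν) := hgnn _ (le_of_lt hIpos)
  -- key bound: every element of the set is ≤ g (I ν)
  have hbound : ∀ h : ℝ, 0 ≤ h → g h - μ * h ≤ g (I ν) := by
    intro h hh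
    rcases le_or_gt h (I ν) with hcase | hcase
    · have h1 : g h ≤ g (I ν) := by
        rcases eq_or_lt_of_le hcase with rfl | hlt
        · exact le_refl _
        · exact le_of_lt (hmono hh (le_of_lt hIpos) hlt)
      have h2 : 0 ≤ μ * h := mul_nonneg (by positivity) hh
      linarith
    · -- MVT on [I ν, h]
      obtain ⟨c, hc, hcder⟩ := exists_deriv_eq_slope g hcase
        (hgcont.mono (Set.Icc_subset_Ici_iff (le_of_lt hcase)
          |>.mpr (le_of_lt hIpos)))
        (fun x hx => (hgdiff x (lt_trans hIpos hx.1)).differentiableWithinAt)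
      have hcpos' : 0 < c := lt_trans hIpos hc.1
      have hlt : deriv g c < ν := by
        rw [← hIder]
        exact hanti (Set.mem_Ioi.mpr hIpos) (Set.mem_Ioi.mpr hcpos') hc.1
      have hslope : g h - g (I ν) = deriv g c * (h - I ν) := by
        have hne : h - I ν ≠ 0 := ne_of_gt (by linarith)
        rw [eq_div_iff hne] at hcder
        linarith [hcder]
      have h3 : deriv g c * (h - I ν) ≤ ν * (h - I ν) :=
        mul_le_mul_of_nonneg_right (le_of_lt hlt) (by linarith)
      have h4 : ν * (h - I ν) ≤ μ * h := by
        nlinarith [mul_nonneg (le_of_lt hν) (le_of_lt hIpos),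
          mul_le_mul_of_nonneg_right (le_of_lt hμν) hh]
      linarith
  have hsup : sSup ((fun h => g h - ν * (c0 m / (m * a)) * h) '' Set.Ici 0)
      ≤ g (I ν) := by
    apply Real.sSup_le _ hgInn
    rintro x ⟨h, hh, rfl⟩
    have := hbound h hh
    simpa [hμdef, mul_assoc] using this
  have hfinal : sSup ((fun h => g h - ν * (c0 m / (m * a)) * h) '' Set.Ici 0)
      - β < 0 := by linarith
  have : m * a * (sSup ((fun h => g h - ν * (c0 m / (m * a)) * h) '' Set.Ici 0)
      - β) < 0 := mul_neg_of_pos_of_neg hma hfinal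
  nlinarith [this]
end

section
/- Let a, b > 0, γ ∈ (0,1), and g satisfy the Inada assumptions. Define ℓ(m) := sup_{h≥0}{ g(h) − ((1−γ)/γ)(1 + b/(a m)) h } for m > 0. Then ℓ is differentiable on (0,∞) with ℓ'(m) = ((1−γ)/γ) (b/(a m²)) I( ((1−γ)/γ)(1 + b/(a m)) ), where I = (g')^{−1}; in particular ℓ is strictly increasing. -/
open Set Filter

lemma inada_anti {g : ℝ → ℝ} (hg : Inada g) : StrictAntiOn (deriv g) (Set.Ioi 0) := by
  obtain ⟨-, -, -, hd, hd2, -, hneg, -, -⟩ := hg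
  exact strictAntiOn_of_deriv_neg (convex_Ioi 0)
    (fun x hx => ((hd2 x hx).continuousAt).continuousWithinAt)
    (by simpa [interior_Ioi] using fun x hx => hneg x hx)

lemma inada_tangent {g : ℝ → ℝ} (hg : Inada g) {x y : ℝ} (hx : 0 < x) (hy : 0 ≤ y) :
    g y ≤ g x + deriv g x * (y - x) := by
  have anti := inada_anti hg
  obtain ⟨-, hcont, -, hd, -, -, -, -, -⟩ := hg
  rcases lt_trichotomy y x with h | h | h
  · obtain ⟨ξ, hξ, hslope⟩ := exists_hasDerivAt_eq_slope g (deriv g) h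
      (hcont.mono ((Icc_subset_Ici_iff (le_of_lt h)).mpr hy))
      (fun z hz => (hd z (lt_of_le_of_lt hy hz.1)).hasDerivAt)
    have hξx : deriv g x < deriv g ξ := anti (lt_of_le_of_lt hy hξ.1) hx hξ.2
    have hxy : 0 < x - y := by linarith
    have heq : g x - g y = deriv g ξ * (x - y) := by
      field_simp at hslope; linarith [hslope]
    nlinarith
  · simp [h]
  · obtain ⟨ξ, hξ, hslope⟩ := exists_hasDerivAt_eq_slope g (deriv g) h
      (hcont.mono ((Icc_subset_Ici_iff (le_of_lt h)).mpr hx.le))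
      (fun z hz => (hd z (hx.trans hz.1)).hasDerivAt)
    have hξx : deriv g ξ < deriv g x := anti hx (hx.trans hξ.1) hξ.1
    have hxy : 0 < y - x := by linarith
    have heq : g y - g x = deriv g ξ * (y - x) := by
      field_simp at hslope; linarith [hslope]
    nlinarith

lemma inada_key {g I : ℝ → ℝ} (hg : Inada g)
    (hI : ∀ l > (0 : ℝ), 0 < I l ∧ deriv g (I l) = l) {c : ℝ} (hc : 0 < c)
    {h : ℝ} (hh : 0 ≤ h) : g h - c * h ≤ g (I c) - c * I c := by
  obtain ⟨hIc, hgI⟩ := hI c hc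
  have := inada_tangent hg hIc hh
  rw [hgI] at this
  nlinarith

lemma inada_sSup {g I : ℝ → ℝ} (hg : Inada g)
    (hI : ∀ l > (0 : ℝ), 0 < I l ∧ deriv g (I l) = l) {c : ℝ} (hc : 0 < c) :
    sSup ((fun h => g h - c * h) '' Set.Ici 0) = g (I c) - c * I c := by
  apply IsGreatest.csSup_eq
  constructor
  · exact ⟨I c, (hI c hc).1.le, rfl⟩
  · rintro y ⟨h, hh, rfl⟩
    exact inada_key hg hI hc hh

lemma inada_I_cont {g I : ℝ → ℝ} (hg : Inada g)
    (hI : ∀ l > (0 : ℝ), 0 < I l ∧ deriv g (I l) = l) {c0 : ℝ} (hc0 : 0 < c0) :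
    ContinuousAt I c0 := by
  have anti := inada_anti hg
  have hpos := hg.2.2.2.2.2.1
  obtain ⟨hx, hgx⟩ := hI c0 hc0
  rw [Metric.continuousAt_iff]
  intro ε hε
  set x := I c0 with hxdef
  set ε' := min (ε / 2) (x / 2) with hε'def
  have hε' : 0 < ε' := lt_min (by linarith) (by linarith)
  have hε'x : ε' < x := lt_of_le_of_lt (min_le_right _ _) (by linarith)
  have hxm : 0 < x - ε' := by linarith
  have hxp : 0 < x + ε' := by linarith
  set c1 := deriv g (x + ε') with hc1def
  set c2 := deriv g (x - ε') with hc2def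
  have hc1 : c1 < c0 := by
    have := anti (Set.mem_Ioi.mpr hx) (Set.mem_Ioi.mpr hxp) (by linarith)
    rwa [hgx] at this
  have hc2 : c0 < c2 := by
    have := anti (Set.mem_Ioi.mpr hxm) (Set.mem_Ioi.mpr hx) (by linarith)
    rwa [hgx] at this
  refine ⟨min (c0 - c1) (c2 - c0), lt_min (by linarith) (by linarith), ?_⟩
  intro c' hc'
  rw [Real.dist_eq] at hc'
  have habs := abs_lt.mp (lt_of_lt_of_le hc' (le_refl _))
  have hcc1 : c1 < c' := by
    have := hc'.trans_le (min_le_left _ _); have := abs_lt.mp this; linarith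
  have hcc2 : c' < c2 := by
    have := hc'.trans_le (min_le_right _ _); have := abs_lt.mp this; linarith
  have hc'pos : 0 < c' := lt_trans (hpos _ hxp) hcc1
  obtain ⟨hIc', hgIc'⟩ := hI c' hc'pos
  have hup : I c' < x + ε' := by
    by_contra hcon
    push_neg at hcon
    rcases eq_or_lt_of_le hcon with heq | hlt
    · have : c1 = c' := by rw [hc1def, heq, hgIc']
      linarith
    · have := anti (Set.mem_Ioi.mpr hxp) (Set.mem_Ioi.mpr (hxp.trans hlt)) hlt
      rw [hgIc'] at this; exact absurd hcc1 (by linarith)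
  have hdown : x - ε' < I c' := by
    by_contra hcon
    push_neg at hcon
    rcases eq_or_lt_of_le hcon with heq | hlt
    · have : c2 = c' := by rw [hc2def, ← heq, hgIc']
      linarith
    · have := anti (Set.mem_Ioi.mpr hIc') (Set.mem_Ioi.mpr hxm) hlt
      rw [hgIc'] at this; exact absurd hcc2 (by linarith)
  rw [Real.dist_eq, abs_lt]
  have : ε' ≤ ε / 2 := min_le_left _ _
  constructor <;> linarith

lemma inada_hasDerivAt_F {g I : ℝ → ℝ} (hg : Inada g)
    (hI : ∀ l > (0 : ℝ), 0 < I l ∧ deriv g (I l) = l) {c0 : ℝ} (hc0 : 0 < c0) :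
    HasDerivAt (fun c => g (I c) - c * I c) (-(I c0)) c0 := by
  rw [hasDerivAt_iff_isLittleO, Asymptotics.isLittleO_iff]
  intro ε hε
  have hcont : ∀ᶠ c in nhds c0, |I c - I c0| ≤ ε := by
    have := (inada_I_cont hg hI hc0).tendsto
    have := Metric.tendsto_nhds.mp this ε hε
    filter_upwards [this] with c hc
    rw [Real.dist_eq] at hc; exact hc.le
  filter_upwards [hcont, eventually_gt_nhds hc0] with c hIc hcpos
  obtain ⟨hI0pos, -⟩ := hI c0 hc0
  obtain ⟨hIcpos, -⟩ := hI c hcpos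
  have key1 : g (I c0) - c * I c0 ≤ g (I c) - c * I c := inada_key hg hI hcpos hI0pos.le
  have key2 : g (I c) - c0 * I c ≤ g (I c0) - c0 * I c0 := inada_key hg hI hc0 hIcpos.le
  set D := g (I c) - c * I c - (g (I c0) - c0 * I c0) - (c - c0) * (-(I c0)) with hD
  have hD0 : 0 ≤ D := by rw [hD]; nlinarith
  have hDle : D ≤ (c - c0) * (I c0 - I c) := by rw [hD]; nlinarith
  have habs := abs_le.mp hIc
  simp only [smul_eq_mul, Real.norm_eq_abs]
  rw [abs_of_nonneg hD0]
  calc D ≤ (c - c0) * (I c0 - I c) := hDle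
    _ ≤ |(c - c0) * (I c0 - I c)| := le_abs_self _
    _ = |c - c0| * |I c0 - I c| := abs_mul _ _
    _ = |c - c0| * |I c - I c0| := by rw [abs_sub_comm (I c0)]
    _ ≤ |c - c0| * ε := mul_le_mul_of_nonneg_left hIc (abs_nonneg _)
    _ = ε * |c - c0| := mul_comm _ _

theorem stmt_14 (g : ℝ → ℝ) (hg : Inada g) (a b γ : ℝ) (ha : 0 < a) (hb : 0 < b)
    (hγ : γ ∈ Set.Ioo (0 : ℝ) 1)
    (I : ℝ → ℝ) (hI : ∀ l > (0 : ℝ), 0 < I l ∧ deriv g (I l) = l)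
    (ell : ℝ → ℝ)
    (hell : ∀ m > (0 : ℝ),
      ell m = sSup ((fun h => g h - (1 - γ) / γ * (1 + b / (a * m)) * h) '' Set.Ici 0)) :
    (∀ m > (0 : ℝ),
      HasDerivAt ell ((1 - γ) / γ * (b / (a * m ^ 2)) *
        I ((1 - γ) / γ * (1 + b / (a * m)))) m) ∧
    StrictMonoOn ell (Set.Ioi 0) := by
  obtain ⟨hγ0, hγ1⟩ := hγ
  set k := (1 - γ) / γ with hk
  have hkpos : 0 < k := div_pos (by linarith) hγ0
  set c : ℝ → ℝ := fun m => k * (1 + b / (a * m)) with hc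
  have hcm : ∀ m > (0 : ℝ), 0 < c m := by
    intro m hm
    have h1 : 0 < b / (a * m) := div_pos hb (mul_pos ha hm)
    have : (0:ℝ) < 1 + b / (a * m) := by linarith
    exact mul_pos hkpos this
  have hellF : ∀ m > (0 : ℝ), ell m = g (I (c m)) - c m * I (c m) := by
    intro m hm
    rw [hell m hm, ← inada_sSup hg hI (hcm m hm)]
  have hmain : ∀ m > (0 : ℝ), HasDerivAt ell (k * (b / (a * m ^ 2)) * I (c m)) m := by
    intro m hm
    have hm' : m ≠ 0 := ne_of_gt hm
    have h1 : HasDerivAt (fun x : ℝ => x⁻¹) (-(m ^ 2)⁻¹) m := hasDerivAt_inv hm'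
    have h2 : HasDerivAt c (k * b / a * -(m ^ 2)⁻¹) m := by
      have hfe : c = fun x => k + k * b / a * x⁻¹ := by
        funext x
        rw [hc]
        simp only [div_eq_mul_inv, mul_inv]
        ring
      rw [hfe]
      exact (h1.const_mul (k * b / a)).const_add k
    have h3 := (inada_hasDerivAt_F hg hI (hcm m hm)).comp m h2
    have heq : -(I (c m)) * (k * b / a * -(m ^ 2)⁻¹) = k * (b / (a * m ^ 2)) * I (c m) := by
      field_simp
    rw [heq] at h3
    have hev : ell =ᶠ[nhds m] fun x => g (I (c x)) - c x * I (c x) := by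
      filter_upwards [eventually_gt_nhds hm] with x hx
      exact hellF x hx
    exact HasDerivAt.congr_of_eventuallyEq h3 hev
  refine ⟨fun m hm => hmain m hm, ?_⟩
  apply strictMonoOn_of_deriv_pos (convex_Ioi 0)
  · exact fun x hx => (hmain x hx).continuousAt.continuousWithinAt
  · intro x hx
    rw [interior_Ioi] at hx
    rw [(hmain x hx).deriv]
    have hIpos := (hI _ (hcm x hx)).1
    have h1 : 0 < b / (a * x ^ 2) := div_pos hb (mul_pos ha (pow_pos hx 2))
    exact mul_pos (mul_pos hkpos h1) hIpos
end

section
/- Let a, b > 0, γ ∈ (0,1), ζ ∈ (0,1), c̄ > 0, β > 0, g Inada, and set θ(m) := (am+b)[(a − (1−ζ^{1−γ})/γ) m + (b − c̄)] + a m (ℓ(m) − β), where ℓ is as above. Then θ''(m) = 2a(a − (1−ζ^{1−γ})/γ) − ((1−γ)/γ)² (b²/(a m³)) I'( ((1−γ)/γ)(1 + b/(am)) ) > 0 for all m > 0 whenever a ≥ (1−ζ^{1−γ})/γ, since I'(y) = 1/g''(I(y)) < 0. -/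
/-!
By concavity of `g`, the supremum defining `ell m` is attained at `I (L m)`, where
`L m = c + d / m` with `c = (1 - γ) / γ` and `d = c b / a`. So `ell = φ ∘ L` for
`φ y = g (I y) - y I y`, and by the envelope theorem `φ' = -I`. Thus `m ell(m)` is the
perspective `m φ(c + d / m)`, whose second derivative is
`(d² / m³) φ''(L m) = -(d² / m³) I'(L m)`, positive because `I' = 1 / g''(I) < 0`;
the quadratic part contributes `2a(a - (1 - ζ^(1-γ)) / γ) ≥ 0`.
-/

open Set Filter Topology

theorem ConcaveOn.isMaxOn_sub_mul_of_hasDerivAt {S : Set ℝ} {f : ℝ → ℝ} {x l : ℝ}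
    (hf : ConcaveOn ℝ S f) (hx : x ∈ interior S) (hfx : HasDerivAt f l x) :
    IsMaxOn (fun y => f y - l * y) S x := by
  have hconc : ConcaveOn ℝ S (fun y => f y - l * y) :=
    hf.sub ((LinearMap.mul ℝ ℝ l).convexOn hf.1)
  have hder : HasDerivAt (-fun y => f y - l * y) 0 x :=
    ((hfx.fun_sub ((hasDerivAt_id x).const_mul l)).neg).congr_deriv (by simp)
  have hmin := hconc.neg.isMinOn_of_rightDeriv_eq_zero hx <| by
    rw [hder.hasDerivWithinAt.derivWithin (uniqueDiffWithinAt_Ioi x)]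
  exact isMaxOn_iff.2 fun y hy => neg_le_neg_iff.mp (isMinOn_iff.1 hmin y hy)

theorem Inada.concaveOn {g : ℝ → ℝ} (hg : Inada g) : ConcaveOn ℝ (Ici 0) g := by
  obtain ⟨-, hcont, -, hdiff, hdiff2, -, hneg, -⟩ := hg
  refine concaveOn_of_deriv2_nonpos (convex_Ici 0) hcont ?_ ?_ ?_ <;> rw [interior_Ici]
  · exact fun x hx => (hdiff x hx).differentiableWithinAt
  · exact fun x hx => (hdiff2 x hx).differentiableWithinAt
  · exact fun x hx => (hneg x hx).le

theorem Inada.differentiableAt {g : ℝ → ℝ} (hg : Inada g) {x : ℝ} (hx : 0 < x) :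
    DifferentiableAt ℝ g x :=
  hg.2.2.2.1 x hx

theorem Inada.deriv_deriv_neg {g : ℝ → ℝ} (hg : Inada g) {x : ℝ} (hx : 0 < x) :
    deriv (deriv g) x < 0 :=
  hg.2.2.2.2.2.2.1 x hx

theorem Inada.sSup_image_sub_mul {g : ℝ → ℝ} (hg : Inada g) {x l : ℝ} (hx : 0 < x)
    (hl : deriv g x = l) :
    sSup ((fun h => g h - l * h) '' Ici 0) = g x - l * x := by
  have hmax := hg.concaveOn.isMaxOn_sub_mul_of_hasDerivAt (by rwa [interior_Ici])
    (hl ▸ (hg.differentiableAt hx).hasDerivAt)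
  exact IsGreatest.csSup_eq ⟨mem_image_of_mem _ (mem_Ici.2 hx.le), forall_mem_image.2 hmax⟩

theorem hasDerivAt_comp_sub_mul_of_deriv_eq {g I : ℝ → ℝ} {I' y : ℝ}
    (hg : DifferentiableAt ℝ g (I y)) (hI : HasDerivAt I I' y) (hgI : deriv g (I y) = y) :
    HasDerivAt (fun z => g (I z) - z * I z) (-I y) y := by
  refine ((hg.hasDerivAt.comp y hI).fun_sub ((hasDerivAt_id y).fun_mul hI)).congr_deriv ?_
  rw [hgI]
  simp

theorem hasDerivAt_mul_comp_add_div {φ : ℝ → ℝ} {c d m φ' : ℝ} (hm : m ≠ 0)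
    (hφ : HasDerivAt φ φ' (c + d / m)) :
    HasDerivAt (fun x => x * φ (c + d / x)) (φ (c + d / m) - d / m * φ') m := by
  have hinner : HasDerivAt (fun x => c + d / x) (-(d / m ^ 2)) m := by
    simpa [div_eq_mul_inv] using ((hasDerivAt_inv hm).const_mul d).const_add c
  refine ((hasDerivAt_id m).fun_mul (hφ.comp m hinner)).congr_deriv ?_
  have hdm : m * (d / m ^ 2) = d / m := by field_simp
  simp only [Function.comp_apply, id]
  linear_combination (-φ') * hdm

theorem hasDerivAt_comp_add_div_sub_div_mul {φ φ' : ℝ → ℝ} {c d m φ'' : ℝ} (hm : m ≠ 0)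
    (hφ : HasDerivAt φ (φ' (c + d / m)) (c + d / m)) (hφ' : HasDerivAt φ' φ'' (c + d / m)) :
    HasDerivAt (fun x => φ (c + d / x) - d / x * φ' (c + d / x)) (d ^ 2 / m ^ 3 * φ'') m := by
  have hinv : HasDerivAt (fun x => d / x) (-(d / m ^ 2)) m := by
    simpa [div_eq_mul_inv] using (hasDerivAt_inv hm).const_mul d
  have hinner : HasDerivAt (fun x => c + d / x) (-(d / m ^ 2)) m := hinv.const_add c
  refine ((hφ.comp m hinner).fun_sub (hinv.fun_mul (hφ'.comp m hinner))).congr_deriv ?_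
  simp only [Function.comp]
  field_simp
  ring

theorem deriv_deriv_eq_of_hasDerivAt {f f' : ℝ → ℝ} {m f'' : ℝ}
    (hf : ∀ᶠ x in 𝓝 m, HasDerivAt f (f' x) x) (hf' : HasDerivAt f' f'' m) :
    deriv (deriv f) m = f'' := by
  rw [Filter.EventuallyEq.deriv_eq (hf.mono fun x hx => hx.deriv)]
  exact hf'.deriv

theorem deriv_deriv_affine_mul_affine_add_perspective {θ φ φ' : ℝ → ℝ}
    {p q r s e c d β m φ'' : ℝ} (hm : 0 < m)
    (hθ : ∀ x > 0, θ x = (p * x + q) * (r * x + s) + e * x * (φ (c + d / x) - β))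
    (hφ : ∀ x > 0, HasDerivAt φ (φ' (c + d / x)) (c + d / x))
    (hφ' : HasDerivAt φ' φ'' (c + d / m)) :
    deriv (deriv θ) m = 2 * p * r + e * (d ^ 2 / m ^ 3 * φ'') := by
  refine deriv_deriv_eq_of_hasDerivAt (f' := fun x => 2 * p * r * x + (p * s + q * r - e * β)
    + e * (φ (c + d / x) - d / x * φ' (c + d / x))) ((eventually_gt_nhds hm).mono fun x hx => ?_)
    ((((hasDerivAt_id m).const_mul _).add_const _).fun_add
      ((hasDerivAt_comp_add_div_sub_div_mul hm.ne' (hφ m hm) hφ').const_mul e) |>.congr_deriv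
      (by simp))
  have hev : θ =ᶠ[𝓝 x] fun y =>
      (p * y + q) * (r * y + s) + e * (y * φ (c + d / y)) - e * β * y := by
    filter_upwards [Ioi_mem_nhds hx] with y hy
    rw [hθ y hy]
    ring
  have hpoly := (((hasDerivAt_id x).const_mul p).add_const q).fun_mul
    (((hasDerivAt_id x).const_mul r).add_const s)
  refine HasDerivAt.congr_of_eventuallyEq ?_ hev
  refine ((hpoly.fun_add ((hasDerivAt_mul_comp_add_div hx.ne' (hφ x hx)).const_mul e)).fun_sub
    ((hasDerivAt_id x).const_mul (e * β))).congr_deriv ?_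
  simp only [id]
  ring

theorem stmt_15_general (g : ℝ → ℝ) (hg : Inada g) (a b γ ζ cbar β : ℝ)
    (hb : 0 < b) (hγ : γ ∈ Set.Ioo (0 : ℝ) 1) (hζ : ζ ∈ Set.Ioo (0 : ℝ) 1)
    (hage : (1 - ζ ^ (1 - γ)) / γ ≤ a)
    (I : ℝ → ℝ) (hI : ∀ l > (0 : ℝ), 0 < I l ∧ deriv g (I l) = l)
    (hI' : ∀ y > (0 : ℝ), HasDerivAt I (1 / deriv (deriv g) (I y)) y)
    (ell θ : ℝ → ℝ)
    (hell : ∀ m > (0 : ℝ),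
      ell m = sSup ((fun h => g h - (1 - γ) / γ * (1 + b / (a * m)) * h) '' Set.Ici 0))
    (hθ : ∀ m, θ m = (a * m + b) * ((a - (1 - ζ ^ (1 - γ)) / γ) * m + (b - cbar))
        + a * m * (ell m - β)) :
    ∀ m > (0 : ℝ),
      deriv (deriv θ) m
        = 2 * a * (a - (1 - ζ ^ (1 - γ)) / γ) -
            ((1 - γ) / γ) ^ 2 * (b ^ 2 / (a * m ^ 3)) *
              deriv I ((1 - γ) / γ * (1 + b / (a * m))) ∧
      0 < deriv (deriv θ) m := by
  intro m hm
  obtain ⟨hγ0, hγ1⟩ := hγ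
  set c := (1 - γ) / γ
  set k := (1 - ζ ^ (1 - γ)) / γ
  have hc : 0 < c := div_pos (by linarith) hγ0
  have hk : 0 < k := div_pos (sub_pos.2 (Real.rpow_lt_one hζ.1.le hζ.2 (by linarith))) hγ0
  have ha : 0 < a := hk.trans_le hage
  set d := c * b / a
  have hL : ∀ x ≠ 0, c * (1 + b / (a * x)) = c + d / x := fun x hx => by
    simp only [d]
    field_simp
  have hLpos : ∀ x > 0, 0 < c + d / x := fun x hx => by positivity
  have hell_eq : ∀ x > 0, ell x = g (I (c + d / x)) - (c + d / x) * I (c + d / x) := by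
    intro x hx
    obtain ⟨hIpos, hgI⟩ := hI _ (hLpos x hx)
    rw [hell x hx, hL x hx.ne', hg.sSup_image_sub_mul hIpos hgI]
  have hφ : ∀ x > 0, HasDerivAt (fun y => g (I y) - y * I y) (-I (c + d / x)) (c + d / x) :=
    fun x hx => hasDerivAt_comp_sub_mul_of_deriv_eq (hg.differentiableAt (hI _ (hLpos x hx)).1)
      (hI' _ (hLpos x hx)) (hI _ (hLpos x hx)).2
  have hI'm := hI' _ (hLpos m hm)
  have hI'neg : deriv I (c + d / m) < 0 := by
    rw [hI'm.deriv, one_div, inv_lt_zero]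
    exact hg.deriv_deriv_neg (hI _ (hLpos m hm)).1
  rw [deriv_deriv_affine_mul_affine_add_perspective hm (fun x hx => by rw [hθ, hell_eq x hx]) hφ
    hI'm.differentiableAt.hasDerivAt.neg, hL m hm.ne']
  generalize deriv I (c + d / m) = J at hI'neg ⊢
  constructor
  · simp only [d]
    field_simp
    ring
  · exact add_pos_of_nonneg_of_pos (mul_nonneg (by positivity) (sub_nonneg.2 hage))
      (mul_pos ha (mul_pos (by positivity) (neg_pos.2 hI'neg)))

theorem stmt_15 (g : ℝ → ℝ) (hg : Inada g) (a b γ ζ cbar β : ℝ)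
    (hb : 0 < b) (hγ : γ ∈ Set.Ioo (0 : ℝ) 1) (hζ : ζ ∈ Set.Ioo (0 : ℝ) 1)
    (hcbar : 0 < cbar) (hβ : 0 < β)
    (hage : (1 - ζ ^ (1 - γ)) / γ ≤ a)
    (I : ℝ → ℝ) (hI : ∀ l > (0 : ℝ), 0 < I l ∧ deriv g (I l) = l)
    (hI' : ∀ y > (0 : ℝ), HasDerivAt I (1 / deriv (deriv g) (I y)) y)
    (ell θ : ℝ → ℝ)
    (hell : ∀ m > (0 : ℝ),
      ell m = sSup ((fun h => g h - (1 - γ) / γ * (1 + b / (a * m)) * h) '' Set.Ici 0))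
    (hθ : ∀ m, θ m = (a * m + b) * ((a - (1 - ζ ^ (1 - γ)) / γ) * m + (b - cbar))
        + a * m * (ell m - β)) :
    ∀ m > (0 : ℝ),
      deriv (deriv θ) m
        = 2 * a * (a - (1 - ζ ^ (1 - γ)) / γ) -
            ((1 - γ) / γ) ^ 2 * (b ^ 2 / (a * m ^ 3)) *
              deriv I ((1 - γ) / γ * (1 + b / (a * m))) ∧
      0 < deriv (deriv θ) m :=
  stmt_15_general g hg a b γ ζ cbar β hb hγ hζ hage I hI hI' ell θ hell hθ
end

section
/- Under the assumptions of Theorem on β_g (γ, ζ ∈ (0,1), c̄ > 0, Inada g with g(I((1−γ)/γ)) < β), for α ∈ [β_g, β] the affine function c_0 + α satisfies L(c_0 + α)(m) > 0 for all m > 0, whereas for α ∈ [0, β_g), L(c_0 + α)(m) → −∞ as m → ∞. In particular, c_0 + α is a supersolution of the reduced HJB equation if and only if α ∈ [β_g, β]. -/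
lemma tangent_bound (g : ℝ → ℝ) (hg : Inada g) {x0 k0 : ℝ} (hx0 : 0 < x0)
    (hd : deriv g x0 = k0) : ∀ h ≥ (0:ℝ), g h ≤ g x0 + k0 * (h - x0) := by
  obtain ⟨hg0, hcont, _, hdiff, hdiff2, hpos, hneg, _, _⟩ := hg
  have hanti : StrictAntiOn (deriv g) (Set.Ioi 0) := by
    apply strictAntiOn_of_deriv_neg (convex_Ioi 0)
    · exact fun x hx => ((hdiff2 x hx).continuousAt).continuousWithinAt
    · rw [interior_Ioi]; exact hneg
  intro h hh
  rcases lt_trichotomy h x0 with hlt | heq | hgt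
  · obtain ⟨c, hc, hceq⟩ := exists_deriv_eq_slope g hlt
      (hcont.mono (by intro x hx; exact le_trans hh hx.1))
      (fun x hx => ((hdiff x (lt_of_le_of_lt hh hx.1)).differentiableWithinAt))
    have hc0 : c ∈ Set.Ioi (0:ℝ) := lt_of_le_of_lt hh hc.1
    have := hanti hc0 (Set.mem_Ioi.2 hx0) hc.2
    rw [hceq, hd] at this
    have hx0h : 0 < x0 - h := by linarith
    rw [lt_div_iff₀ hx0h] at this
    nlinarith
  · simp [heq]
  · obtain ⟨c, hc, hceq⟩ := exists_deriv_eq_slope g hgt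
      (hcont.mono (by intro x hx; exact le_trans (le_of_lt hx0) hx.1))
      (fun x hx => ((hdiff x (lt_trans hx0 hx.1)).differentiableWithinAt))
    have := hanti (Set.mem_Ioi.2 hx0) (Set.mem_Ioi.2 (lt_trans hx0 hc.1)) hc.1
    rw [hceq, hd] at this
    have hhx0 : 0 < h - x0 := by linarith
    rw [div_lt_iff₀ hhx0] at this
    nlinarith

lemma sup_le_bound (g : ℝ → ℝ) (hg : Inada g) {x0 k0 : ℝ} (hx0 : 0 < x0)
    (hd : deriv g x0 = k0) {k : ℝ} (hk : k0 ≤ k) :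
    sSup ((fun h => g h - k * h) '' Set.Ici 0) ≤ g x0 - k0 * x0 := by
  have htan := tangent_bound g hg hx0 hd
  have h0 : (0:ℝ) ≤ g x0 - k0 * x0 := by have := htan 0 le_rfl; rw [hg.1] at this; linarith
  apply Real.sSup_le _ h0
  rintro x ⟨h, hh, rfl⟩
  have := htan h hh
  have hkh : k0 * h ≤ k * h := mul_le_mul_of_nonneg_right hk hh
  simp only at *
  nlinarith

lemma bound_le_sup (g : ℝ → ℝ) (hg : Inada g) {x0 k0 : ℝ} (hx0 : 0 < x0)
    (hd : deriv g x0 = k0) {k : ℝ} (hk : k0 ≤ k) :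
    g x0 - k * x0 ≤ sSup ((fun h => g h - k * h) '' Set.Ici 0) := by
  have htan := tangent_bound g hg hx0 hd
  apply le_csSup
  · refine ⟨g x0 - k0 * x0, ?_⟩
    rintro x ⟨h, hh, rfl⟩
    have := htan h hh
    have hkh : k0 * h ≤ k * h := mul_le_mul_of_nonneg_right hk hh
    simp only at *
    nlinarith
  · exact ⟨x0, le_of_lt hx0, rfl⟩

theorem stmt_16 (g : ℝ → ℝ) (hg : Inada g) (γ ζ δ r β cbar a betag : ℝ)
    (hγ : γ ∈ Set.Ioo (0 : ℝ) 1) (hζ : ζ ∈ Set.Ioo (0 : ℝ) 1) (hβ : 0 < β)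
    (hcbar : cbar = δ / γ + (1 - 1 / γ) * r) (hcpos : 0 < cbar)
    (I : ℝ → ℝ) (hI : ∀ l > (0 : ℝ), 0 < I l ∧ deriv g (I l) = l)
    (hgI : g (I ((1 - γ) / γ)) < β)
    (ha : a = (1 - ζ ^ (1 - γ)) / γ)
    (hbetag : betag = β - sSup ((fun h => g h - (1 - γ) / γ * h) '' Set.Ici 0))
    (c0 : ℝ → ℝ) (hc0 : ∀ m, c0 m = a * m + cbar)
    (Lop : ℝ → ℝ → ℝ)
    (hLop : ∀ α : ℝ, ∀ m > (0 : ℝ),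
      Lop α m = (c0 m + α) ^ 2 - c0 m * (c0 m + α) +
        m * a * (sSup ((fun h => g h - (1 - γ) / γ * ((c0 m + α) / (m * a)) * h) ''
          Set.Ici 0) - β)) :
    (∀ α ∈ Set.Icc betag β, ∀ m > (0 : ℝ), 0 < Lop α m) ∧
    (∀ α ∈ Set.Ico (0 : ℝ) betag, Filter.Tendsto (Lop α) Filter.atTop Filter.atBot) ∧
    (∀ α ∈ Set.Icc (0 : ℝ) β, ((∀ m > (0 : ℝ), 0 ≤ Lop α m) ↔ α ∈ Set.Icc betag β)) := by
  obtain ⟨hγ0, hγ1⟩ := hγ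
  set k0 := (1 - γ) / γ with hk0def
  have hk0pos : 0 < k0 := div_pos (by linarith) hγ0
  obtain ⟨hx0, hdx0⟩ := hI k0 hk0pos
  set x0 := I k0 with hx0def
  have ha' : 0 < a := by
    have hζ1 : ζ ^ (1 - γ) < 1 := Real.rpow_lt_one hζ.1.le hζ.2 (by linarith)
    rw [ha]; exact div_pos (by linarith) hγ0
  have hsup0 : sSup ((fun h => g h - k0 * h) '' Set.Ici 0) = g x0 - k0 * x0 :=
    le_antisymm (sup_le_bound g hg hx0 hdx0 le_rfl) (bound_le_sup g hg hx0 hdx0 le_rfl)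
  have hbetag' : betag = β - (g x0 - k0 * x0) := by rw [hbetag, hsup0]
  have hF0nonneg : 0 ≤ g x0 - k0 * x0 := by
    have := tangent_bound g hg hx0 hdx0 0 le_rfl
    rw [hg.1] at this; nlinarith
  have hbetagpos : 0 < betag := by
    have hd : 0 < β - g x0 := by linarith [hgI]
    nlinarith [mul_pos hk0pos hx0]
  have hbetagle : betag ≤ β := by linarith
  -- Part 1
  have key1 : ∀ α ∈ Set.Icc betag β, ∀ m > (0 : ℝ), 0 < Lop α m := by
    intro α hα m hm
    rw [hLop α m hm]
    set km := k0 * ((c0 m + α) / (m * a)) with hkm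
    have hma : 0 < m * a := mul_pos hm ha'
    have hC : c0 m + α = a * m + cbar + α := by rw [hc0]
    have hαpos : 0 < α := lt_of_lt_of_le hbetagpos hα.1
    have hCpos : 0 < c0 m + α := by rw [hC]; nlinarith
    have hr1 : 1 ≤ (c0 m + α) / (m * a) := by
      rw [le_div_iff₀ hma, hC]; nlinarith
    have hkge : k0 ≤ km := le_mul_of_one_le_right hk0pos.le hr1
    have hlow := bound_le_sup g hg hx0 hdx0 hkge
    set S := sSup ((fun h => g h - km * h) '' Set.Ici 0) with hS
    have hmakm : m * a * km = k0 * (c0 m + α) := by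
      rw [hkm]; field_simp
    have h1 : m * a * (g x0 - km * x0 - β) ≤ m * a * (S - β) :=
      mul_le_mul_of_nonneg_left (by linarith) hma.le
    have h2 : m * a * (g x0 - km * x0 - β) =
        m * a * (g x0 - β) - k0 * x0 * (c0 m + α) := by
      linear_combination (-x0) * hmakm
    have h3 : betag * (c0 m + α) ≤ α * (c0 m + α) :=
      mul_le_mul_of_nonneg_right hα.1 hCpos.le
    have h4 : 0 < (β - g x0) * (cbar + α) :=
      mul_pos (by linarith [hgI]) (by linarith)
    have hquad : (c0 m + α) ^ 2 - c0 m * (c0 m + α) = α * (c0 m + α) := by ring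
    have h5 : betag * (c0 m + α) - k0 * x0 * (c0 m + α) = (β - g x0) * (c0 m + α) := by
      have hb : betag = β - g x0 + k0 * x0 := by linarith [hbetag']
      rw [hb]; ring
    have h6 : (β - g x0) * (c0 m + α) + m * a * (g x0 - β) = (β - g x0) * (cbar + α) := by
      rw [hC]; ring
    linarith [h1, h2, h3, h4, h5, h6, hquad]
  -- Part 2
  have key2 : ∀ α ∈ Set.Ico (0 : ℝ) betag,
      Filter.Tendsto (Lop α) Filter.atTop Filter.atBot := by
    intro α hα
    have hneg : a * (α - betag) < 0 := mul_neg_of_pos_of_neg ha' (by linarith [hα.2])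
    have hlin : Filter.Tendsto (fun m => a * (α - betag) * m + α * (cbar + α))
        Filter.atTop Filter.atBot :=
      Filter.tendsto_atBot_add_const_right _ _
        ((Filter.tendsto_const_mul_atBot_of_neg hneg).2 Filter.tendsto_id)
    refine Filter.tendsto_atBot_mono' Filter.atTop ?_ hlin
    filter_upwards [Filter.eventually_gt_atTop (0 : ℝ)] with m hm
    rw [hLop α m hm]
    set km := k0 * ((c0 m + α) / (m * a)) with hkm
    have hma : 0 < m * a := mul_pos hm ha'
    have hC : c0 m + α = a * m + cbar + α := by rw [hc0]
    have hr1 : 1 ≤ (c0 m + α) / (m * a) := by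
      rw [le_div_iff₀ hma, hC]; nlinarith [hα.1, hcpos]
    have hkge : k0 ≤ km := le_mul_of_one_le_right hk0pos.le hr1
    have hub := sup_le_bound g hg hx0 hdx0 hkge
    set S := sSup ((fun h => g h - km * h) '' Set.Ici 0) with hS
    have h1 : m * a * (S - β) ≤ m * a * (-betag) :=
      mul_le_mul_of_nonneg_left (by linarith [hbetag']) hma.le
    have hquad : (c0 m + α) ^ 2 - c0 m * (c0 m + α) = α * (c0 m + α) := by ring
    have h7 : α * (c0 m + α) + m * a * (-betag) = a * (α - betag) * m + α * (cbar + α) := by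
      rw [hC]; ring
    linarith [h1, hquad, h7]
  refine ⟨key1, key2, ?_⟩
  intro α hα
  constructor
  · intro hL
    refine ⟨?_, hα.2⟩
    by_contra hcon
    push_neg at hcon
    have htend := key2 α ⟨hα.1, hcon⟩
    obtain ⟨m, hm1, hm2⟩ :=
      ((htend.eventually (Filter.eventually_lt_atBot (0 : ℝ))).and
        (Filter.eventually_gt_atTop (0 : ℝ))).exists
    linarith [hL m hm2]
  · intro hmem m hm
    exact (key1 α hmem m hm).le
end

section
/- Let γ ∈ (0,1), ζ ∈ (0,1), δ ≥ 0, r ∈ ℝ, β > 0 with δ + (γ−1)r > 0; set a := (1−ζ^{1−γ})/γ. For the function u_0 given by the integral formula, one has lim_{m→∞} m/(γ u_0(m)) = 1/(1 − ζ^{1−γ}); equivalently u_0(m)/m → a as m → ∞. -/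
/-!
After the substitution `t = x y`, `x ∫₀^∞ e^{-xy} (y+1)^{-p} dy = ∫₀^∞ e^{-t} (t/x+1)^{-p} dt`,
which tends to `∫₀^∞ e^{-t} dt = 1` by dominated convergence (the integrand is bounded by `e^{-t}`).
Since `u0 m` is `β` divided by such an integral at `x = (1 - ζ^{1-γ}) m / (βγ)`, this gives
`m / (γ u0 m) → 1 / (1 - ζ^{1-γ})`, and inverting gives `u0 m / m → a`.
-/

open Real MeasureTheory Set Filter Topology

theorem tendsto_integral_exp_neg_mul_rpow_div_add_one {p : ℝ} (hp : 0 ≤ p) :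
    Tendsto (fun x : ℝ => ∫ t in Ioi (0 : ℝ), exp (-t) * (t / x + 1) ^ (-p)) atTop (𝓝 1) := by
  have hdom : Tendsto (fun x : ℝ => ∫ t in Ioi (0 : ℝ), exp (-t) * (t / x + 1) ^ (-p)) atTop
      (𝓝 (∫ t in Ioi (0 : ℝ), exp (-t))) := by
    refine tendsto_integral_filter_of_dominated_convergence (fun t => exp (-t)) ?_ ?_ ?_ ?_
    · exact .of_forall fun x => (by fun_prop : Measurable fun t : ℝ =>
        exp (-t) * (t / x + 1) ^ (-p)).aestronglyMeasurable
    · filter_upwards [eventually_gt_atTop 0] with x hx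
      filter_upwards [ae_restrict_mem measurableSet_Ioi] with t ht
      have hbase : 1 ≤ t / x + 1 := le_add_of_nonneg_left (div_pos ht hx).le
      rw [norm_mul, norm_of_nonneg (exp_pos _).le,
        norm_of_nonneg (rpow_nonneg (zero_le_one.trans hbase) _)]
      exact mul_le_of_le_one_right (exp_pos _).le
        (rpow_le_one_of_one_le_of_nonpos hbase (neg_nonpos.2 hp))
    · exact (exp_neg_integrableOn_Ioi 0 one_pos).congr_fun (fun t _ => by simp) measurableSet_Ioi
    · refine .of_forall fun t => ?_
      have hbase : Tendsto (fun x : ℝ => t / x + 1) atTop (𝓝 1) := by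
        simpa using (tendsto_const_nhds.div_atTop tendsto_id).add_const (1 : ℝ)
      simpa using (hbase.rpow_const (Or.inl one_ne_zero)).const_mul (exp (-t))
  rwa [integral_exp_neg_Ioi_zero] at hdom

theorem tendsto_mul_integral_exp_neg_mul_add_one_rpow {p : ℝ} (hp : 0 ≤ p) :
    Tendsto (fun x : ℝ => x * ∫ y in Ioi (0 : ℝ), exp (-(x * y)) * (y + 1) ^ (-p))
      atTop (𝓝 1) := by
  refine (tendsto_integral_exp_neg_mul_rpow_div_add_one hp).congr' ?_
  filter_upwards [eventually_gt_atTop 0] with x hx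
  have hsubst := integral_comp_mul_left_Ioi (fun t => exp (-t) * (t / x + 1) ^ (-p)) 0 hx
  simp only [mul_zero, mul_div_cancel_left₀ _ hx.ne'] at hsubst
  rw [hsubst, smul_eq_mul, mul_inv_cancel_left₀ hx.ne']

theorem u0_eq_mul_inv_integral (γ ζ δ r β m : ℝ) :
    u0 γ ζ δ r β m = β * (∫ y in Ioi (0 : ℝ),
      exp (-((1 - ζ ^ (1 - γ)) / (β * γ) * m * y)) *
        (y + 1) ^ (-(1 + (δ + (γ - 1) * r) / (β * γ))))⁻¹ := by
  rw [u0, mul_inv, one_div, inv_inv]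
  congr 2
  refine integral_congr_ae (.of_forall fun y => ?_)
  ring_nf

theorem stmt_17_general (γ ζ δ r β a : ℝ) (hγ : γ ∈ Ioo (0 : ℝ) 1) (hζ : ζ ∈ Ioo (0 : ℝ) 1)
    (hβ : 0 < β) (hwell : 0 < δ + (γ - 1) * r)
    (ha : a = (1 - ζ ^ (1 - γ)) / γ) :
    Tendsto (fun m => m / (γ * u0 γ ζ δ r β m)) atTop (nhds (1 / (1 - ζ ^ (1 - γ)))) ∧
    Tendsto (fun m => u0 γ ζ δ r β m / m) atTop (nhds a) := by
  simp only [u0_eq_mul_inv_integral]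
  set c := 1 - ζ ^ (1 - γ)
  set p := 1 + (δ + (γ - 1) * r) / (β * γ)
  have hc : 0 < c := sub_pos.2 (rpow_lt_one hζ.1.le hζ.2 (sub_pos.2 hγ.2))
  have hβγ : 0 < β * γ := mul_pos hβ hγ.1
  have hp : 0 ≤ p := add_nonneg zero_le_one (div_pos hwell hβγ).le
  have hratio := ((tendsto_mul_integral_exp_neg_mul_add_one_rpow hp).comp
    (tendsto_id.const_mul_atTop (div_pos hc hβγ))).const_mul (1 / c)
  rw [mul_one] at hratio
  replace hratio : Tendsto (fun m => m / (γ * (β * (∫ y in Ioi (0 : ℝ),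
      exp (-(c / (β * γ) * m * y)) * (y + 1) ^ (-p))⁻¹))) atTop (𝓝 (1 / c)) := by
    refine hratio.congr fun m => ?_
    simp only [Function.comp_apply, id]
    field_simp
  refine ⟨hratio, ?_⟩
  have hlim := (hratio.inv₀ (by positivity)).const_mul γ⁻¹
  rw [one_div, inv_inv, ← div_eq_inv_mul, ← ha] at hlim
  refine hlim.congr fun m => ?_
  rw [inv_div, mul_div_assoc', inv_mul_cancel_left₀ hγ.1.ne']

theorem stmt_17 (γ ζ δ r β a : ℝ) (hγ : γ ∈ Ioo (0 : ℝ) 1) (hζ : ζ ∈ Ioo (0 : ℝ) 1)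
    (hδ : 0 ≤ δ) (hβ : 0 < β) (hwell : 0 < δ + (γ - 1) * r)
    (ha : a = (1 - ζ ^ (1 - γ)) / γ) :
    Tendsto (fun m => m / (γ * u0 γ ζ δ r β m)) atTop (nhds (1 / (1 - ζ ^ (1 - γ)))) ∧
    Tendsto (fun m => u0 γ ζ δ r β m / m) atTop (nhds a) :=
  stmt_17_general γ ζ δ r β a hγ hζ hβ hwell ha
end

section
/- Let γ ∈ (0,1), ζ ∈ (0,1), c̄ > 0, β > 0, g Inada with g(I((1−γ)/γ)) < β, and let u : ℝ₊ → ℝ₊ be any nonnegative, strictly increasing, concave classical solution of the reduced HJB equation L u = 0 on (0,∞). Then u(m) ≥ c_0(m) for all m > 0. -/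
theorem stmt_19 (g : ℝ → ℝ) (hg : Inada g) (γ ζ δ r β cbar a : ℝ)
    (hγ : γ ∈ Set.Ioo (0 : ℝ) 1) (hζ : ζ ∈ Set.Ioo (0 : ℝ) 1) (hβ : 0 < β)
    (hcbar : cbar = δ / γ + (1 - 1 / γ) * r) (hcpos : 0 < cbar)
    (I : ℝ → ℝ) (hI : ∀ l > (0 : ℝ), 0 < I l ∧ deriv g (I l) = l)
    (hgI : g (I ((1 - γ) / γ)) < β)
    (ha : a = (1 - ζ ^ (1 - γ)) / γ)
    (c0 : ℝ → ℝ) (hc0 : ∀ m, c0 m = a * m + cbar)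
    (u u' : ℝ → ℝ) (hnonneg : ∀ m ∈ Set.Ici (0 : ℝ), 0 ≤ u m)
    (hmono : StrictMonoOn u (Set.Ici 0)) (hconc : ConcaveOn ℝ (Set.Ici 0) u)
    (hderiv : ∀ m > (0 : ℝ), HasDerivAt u (u' m) m)
    (hsol : ∀ m > (0 : ℝ),
      u m ^ 2 - c0 m * u m +
        m * u' m * (sSup ((fun h => g h - (1 - γ) / γ * (u m / (m * u' m)) * h) ''
          Set.Ici 0) - β) = 0) :
    ∀ m > (0 : ℝ), c0 m ≤ u m := by
  intro m hm
  obtain ⟨hγ0, hγ1⟩ := hγ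
  set l : ℝ := (1 - γ) / γ with hl
  have hlpos : 0 < l := div_pos (by linarith) hγ0
  obtain ⟨hIl, hdIl⟩ := hI l hlpos
  -- g is concave on Ioi 0
  have hgconc : StrictConcaveOn ℝ (Set.Ioi (0:ℝ)) g := by
    apply strictConcaveOn_of_deriv2_neg (convex_Ioi 0)
    · exact fun x hx => ((hg.2.2.2.1 x hx).continuousAt).continuousWithinAt
    · intro x hx
      rw [interior_Ioi] at hx
      simpa using hg.2.2.2.2.2.2.1 x hx
  have hgd : HasDerivAt g l (I l) := by
    simpa [hdIl] using (hg.2.2.2.1 (I l) hIl).hasDerivAt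
  -- tangent line bound for g at I l, for h > 0
  have htan : ∀ h > (0:ℝ), g h - l * h ≤ g (I l) - l * I l := by
    intro h hh
    rcases lt_trichotomy h (I l) with hc | hc | hc
    · have := hgconc.concaveOn.le_slope_of_hasDerivAt (Set.mem_Ioi.2 hh)
        (Set.mem_Ioi.2 hIl) hc hgd
      rw [slope_def_field, le_div_iff₀ (by linarith : (0:ℝ) < I l - h)] at this
      nlinarith [this]
    · simp [hc]
    · have := hgconc.concaveOn.slope_le_of_hasDerivAt (Set.mem_Ioi.2 hIl)
        (Set.mem_Ioi.2 hh) hc hgd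
      rw [slope_def_field, div_le_iff₀ (by linarith : (0:ℝ) < h - I l)] at this
      nlinarith [this]
  -- derivative positivity and m u' m ≤ u m
  have hu'pos : 0 < u' m := by
    have hslope := hconc.slope_le_of_hasDerivAt (Set.mem_Ici.2 hm.le)
      (Set.mem_Ici.2 (by linarith : (0:ℝ) ≤ m + 1)) (by linarith) (hderiv m hm)
    rw [slope_def_field] at hslope
    have hmlt : u m < u (m + 1) :=
      hmono (Set.mem_Ici.2 hm.le) (Set.mem_Ici.2 (by linarith)) (by linarith)
    have : 0 < (u (m+1) - u m) / (m + 1 - m) := by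
      apply div_pos <;> linarith
    linarith
  have hmu' : m * u' m ≤ u m := by
    have hslope := hconc.le_slope_of_hasDerivAt (Set.mem_Ici.2 le_rfl)
      (Set.mem_Ici.2 hm.le) hm (hderiv m hm)
    rw [slope_def_field, sub_zero] at hslope
    have h0 : 0 ≤ u 0 := hnonneg 0 Set.self_mem_Ici
    rw [le_div_iff₀ hm] at hslope
    nlinarith
  have hmu'pos : 0 < m * u' m := mul_pos hm hu'pos
  have hupos : 0 < u m := lt_of_lt_of_le hmu'pos hmu'
  -- the coefficient k ≥ l
  set k : ℝ := l * (u m / (m * u' m)) with hk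
  have hkl : l ≤ k := by
    have h1 : (1:ℝ) ≤ u m / (m * u' m) := (one_le_div hmu'pos).2 hmu'
    nlinarith
  -- bound the sup
  set B : ℝ := max 0 (g (I l) - l * I l) with hB
  have hBβ : B < β := by
    have : g (I l) - l * I l < β := by nlinarith
    exact max_lt hβ this
  have hsup : sSup ((fun h => g h - k * h) '' Set.Ici 0) ≤ B := by
    apply csSup_le
    · exact ⟨g 0 - k * 0, ⟨0, Set.self_mem_Ici, rfl⟩⟩
    · rintro x ⟨h, hh, rfl⟩
      rcases eq_or_lt_of_le (Set.mem_Ici.1 hh) with hc | hc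
      · simp only [← hc, mul_zero, sub_zero, hg.1]
        exact le_max_left _ _
      · have h1 : g h - k * h ≤ g h - l * h := by nlinarith
        exact le_trans (le_trans h1 (htan h hc)) (le_max_right _ _)
  -- conclude from the HJB equation
  have heq := hsol m hm
  have hsupβ : sSup ((fun h => g h - l * (u m / (m * u' m)) * h) '' Set.Ici 0) - β < 0 := by
    have : k = l * (u m / (m * u' m)) := rfl
    rw [← this]
    linarith [hsup]
  nlinarith [mul_pos hmu'pos (neg_pos.2 hsupβ), heq, hupos]
end
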